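/- arXiv:1701.02007 — 3 statements merged into one kernel-verified Lean document; each statement's English description precedes it below -/
import Mathlib

section
/- Let X be an A–B C*-correspondence, let I ⊆ K be closed two-sided ideals of A, and let J ⊆ L be closed two-sided ideals of B. Suppose I ⊆ X-Ind J, so that the quotient X/XJ is an (A/I)–(B/J) correspondence. Then K ⊆ X-Ind L if and only if K/I ⊆ (X/XJ)-Ind (L/J). -/
open scoped MultiplierAlgebra

noncomputable section

/-- A C*-correspondence from `A` to `B` with underlying Banach space `X`:
a right Hilbert `B`-module with a left action of `A` by adjointable operators. -/
structure CStarCorr (A B X : Type*) [NonUnitalCStarAlgebra A] [NonUnitalCStarAlgebra B]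
    [NormedAddCommGroup X] [NormedSpace ℂ X] [CompleteSpace X] : Type _ where
  lsmul : A → X → X
  rsmul : X → B → X
  inner : X → X → B
  add_rsmul : ∀ (x y : X) (b : B), rsmul (x + y) b = rsmul x b + rsmul y b
  rsmul_add : ∀ (x : X) (b c : B), rsmul x (b + c) = rsmul x b + rsmul x c
  rsmul_mul : ∀ (x : X) (b c : B), rsmul (rsmul x b) c = rsmul x (b * c)
  smul_rsmul : ∀ (z : ℂ) (x : X) (b : B), rsmul (z • x) b = z • rsmul x b
  rsmul_smul : ∀ (z : ℂ) (x : X) (b : B), rsmul x (z • b) = z • rsmul x b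
  inner_add_right : ∀ (x y z : X), inner x (y + z) = inner x y + inner x z
  inner_smul_right : ∀ (z : ℂ) (x y : X), inner x (z • y) = z • inner x y
  inner_rsmul_right : ∀ (x y : X) (b : B), inner x (rsmul y b) = inner x y * b
  star_inner : ∀ (x y : X), star (inner x y) = inner y x
  norm_inner_self : ∀ x : X, ‖inner x x‖ = ‖x‖ ^ 2
  lsmul_add : ∀ (a : A) (x y : X), lsmul a (x + y) = lsmul a x + lsmul a y
  add_lsmul : ∀ (a b : A) (x : X), lsmul (a + b) x = lsmul a x + lsmul b x
  mul_lsmul : ∀ (a b : A) (x : X), lsmul (a * b) x = lsmul a (lsmul b x)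
  smul_lsmul : ∀ (z : ℂ) (a : A) (x : X), lsmul (z • a) x = z • lsmul a x
  lsmul_smul : ∀ (z : ℂ) (a : A) (x : X), lsmul a (z • x) = z • lsmul a x
  lsmul_rsmul : ∀ (a : A) (x : X) (b : B), lsmul a (rsmul x b) = rsmul (lsmul a x) b
  inner_lsmul_left : ∀ (a : A) (x y : X), inner (lsmul a x) y = inner x (lsmul (star a) y)

namespace CStarCorr

variable {A B X : Type*} [NonUnitalCStarAlgebra A] [NonUnitalCStarAlgebra B]
    [NormedAddCommGroup X] [NormedSpace ℂ X] [CompleteSpace X]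

/-- `X·S`: the closed submodule of `X` generated by right multiplication by `S ⊆ B`. -/
def smulIdeal (c : CStarCorr A B X) (S : Set B) : Set X :=
  closure (Submodule.span ℂ {z : X | ∃ x b, b ∈ S ∧ z = c.rsmul x b} : Set X)

/-- The ideal of `A` induced from `S ⊆ B` via `X`:  `X-Ind S = {a | a·X ⊆ X·S}`. -/
def ind (c : CStarCorr A B X) (S : Set B) : Set A :=
  {a : A | ∀ x : X, c.lsmul a x ∈ c.smulIdeal S}

end CStarCorr

/-- An `A`–`B` Hilbert bimodule: a C*-correspondence with a compatible left `A`-valued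
inner product. -/
structure CStarBimod (A B X : Type*) [NonUnitalCStarAlgebra A] [NonUnitalCStarAlgebra B]
    [NormedAddCommGroup X] [NormedSpace ℂ X] [CompleteSpace X]
    extends CStarCorr A B X where
  linner : X → X → A
  linner_add_left : ∀ (x y z : X), linner (x + y) z = linner x z + linner y z
  linner_smul_left : ∀ (z : ℂ) (x y : X), linner (z • x) y = z • linner x y
  star_linner : ∀ (x y : X), star (linner x y) = linner y x
  linner_lsmul_left : ∀ (a : A) (x y : X), linner (lsmul a x) y = a * linner x y
  imprim : ∀ (x y z : X), lsmul (linner x y) z = rsmul x (inner y z)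

/-- Left-fullness of a Hilbert bimodule: the left inner products span a dense
subspace of `A`. -/
def CStarBimod.LeftFull {A B X : Type*} [NonUnitalCStarAlgebra A] [NonUnitalCStarAlgebra B]
    [NormedAddCommGroup X] [NormedSpace ℂ X] [CompleteSpace X] (c : CStarBimod A B X) : Prop :=
  closure (Submodule.span ℂ {a : A | ∃ x y, a = c.linner x y} : Set A) = Set.univ

/-- Right-fullness: the `B`-valued inner products span a dense subspace of `B`. -/
def CStarBimod.RightFull {A B X : Type*} [NonUnitalCStarAlgebra A] [NonUnitalCStarAlgebra B]
    [NormedAddCommGroup X] [NormedSpace ℂ X] [CompleteSpace X] (c : CStarBimod A B X) : Prop :=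
  closure (Submodule.span ℂ {b : B | ∃ x y, b = c.inner x y} : Set B) = Set.univ

end

noncomputable section

open Function

/-- KLQ "Coaction functors, II", Lemma (ind): for an `A`–`B` correspondence `X`,
ideals `I ⊆ K` of `A` and `J ⊆ L` of `B` with `I ⊆ X-Ind J`, and a realization of the
quotient correspondence `X/XJ` over `(A/I, B/J)` by surjections `φ, ρ, ψ` with kernels
`I`, `J`, `XJ`:  `K ⊆ X-Ind L` iff `K/I ⊆ (X/XJ)-Ind (L/J)`. -/
theorem ind_lemma {A B A' B' X X' : Type*}
    [NonUnitalCStarAlgebra A] [NonUnitalCStarAlgebra B]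
    [NonUnitalCStarAlgebra A'] [NonUnitalCStarAlgebra B']
    [NormedAddCommGroup X] [NormedSpace ℂ X] [CompleteSpace X]
    [NormedAddCommGroup X'] [NormedSpace ℂ X'] [CompleteSpace X']
    (c : CStarCorr A B X) (c' : CStarCorr A' B' X')
    (I K : TwoSidedIdeal A) (J L : TwoSidedIdeal B)
    (hIc : IsClosed (I : Set A)) (hKc : IsClosed (K : Set A))
    (hJc : IsClosed (J : Set B)) (hLc : IsClosed (L : Set B))
    (hIK : I ≤ K) (hJL : J ≤ L)
    (hIJ : (I : Set A) ⊆ c.ind (J : Set B))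
    (φ : A →⋆ₙₐ[ℂ] A') (ρ : B →⋆ₙₐ[ℂ] B') (ψ : X →ₗ[ℂ] X')
    (hφs : Surjective φ) (hρs : Surjective ρ) (hψs : Surjective ψ)
    (hφker : ∀ a : A, φ a = 0 ↔ a ∈ I) (hρker : ∀ b : B, ρ b = 0 ↔ b ∈ J)
    (hψker : ∀ x : X, ψ x = 0 ↔ x ∈ c.smulIdeal (J : Set B))
    (hom_l : ∀ (a : A) (x : X), ψ (c.lsmul a x) = c'.lsmul (φ a) (ψ x))
    (hom_r : ∀ (x : X) (b : B), ψ (c.rsmul x b) = c'.rsmul (ψ x) (ρ b))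
    (hom_i : ∀ x y : X, ρ (c.inner x y) = c'.inner (ψ x) (ψ y)) :
    (K : Set A) ⊆ c.ind (L : Set B) ↔ φ '' (K : Set A) ⊆ c'.ind (ρ '' (L : Set B)) := by

  classical
  -- ψ is contractive, hence continuous
  have hψnorm : ∀ x : X, ‖ψ x‖ ≤ ‖x‖ := by
    intro x
    have h3 : ‖ρ (c.inner x x)‖ ≤ ‖c.inner x x‖ := NonUnitalStarAlgHom.norm_apply_le ρ _
    rw [hom_i, c'.norm_inner_self, c.norm_inner_self] at h3
    nlinarith [norm_nonneg (ψ x), norm_nonneg x]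
  set ψ' : X →L[ℂ] X' := ψ.mkContinuous 1 (fun x => by simpa using hψnorm x) with hψ'
  have hψ'coe : ⇑ψ' = ⇑ψ := rfl
  have hψcont : Continuous ψ := by rw [← hψ'coe]; exact ψ'.continuous
  -- generators and closed submodules
  have gen : ∀ (S : Set B), Set X := fun S => {z : X | ∃ x b, b ∈ S ∧ z = c.rsmul x b}
  -- image of smulIdeal under ψ lands in smulIdeal of image
  have himage : ∀ (S : Set B), ψ '' c.smulIdeal S ⊆ c'.smulIdeal (ρ '' S) := by
    intro S
    have h1 : ψ '' closure (Submodule.span ℂ {z : X | ∃ x b, b ∈ S ∧ z = c.rsmul x b} : Set X)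
        ⊆ closure (ψ '' (Submodule.span ℂ {z : X | ∃ x b, b ∈ S ∧ z = c.rsmul x b} : Set X)) :=
      image_closure_subset_closure_image hψcont
    refine h1.trans (closure_mono ?_)
    have h2 : ψ '' (Submodule.span ℂ {z : X | ∃ x b, b ∈ S ∧ z = c.rsmul x b} : Set X)
        = (Submodule.span ℂ (ψ '' {z : X | ∃ x b, b ∈ S ∧ z = c.rsmul x b}) : Set X') := by
      rw [← Submodule.map_span]; rfl
    rw [h2]
    apply SetLike.coe_subset_coe.mpr
    apply Submodule.span_mono
    rintro _ ⟨_, ⟨x, b, hb, rfl⟩, rfl⟩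
    exact ⟨ψ x, ρ b, ⟨b, hb, rfl⟩, hom_r x b⟩
  constructor
  · -- forward
    rintro h _ ⟨a, haK, rfl⟩ x'
    obtain ⟨x, rfl⟩ := hψs x'
    rw [← hom_l]
    exact himage _ ⟨c.lsmul a x, h haK x, rfl⟩
  · -- backward
    intro h a haK x
    have hmem : ψ (c.lsmul a x) ∈ c'.smulIdeal (ρ '' (L : Set B)) := by
      rw [hom_l]
      exact h ⟨a, haK, rfl⟩ (ψ x)
    set pL : Submodule ℂ X :=
      (Submodule.span ℂ {z : X | ∃ x b, b ∈ (L : Set B) ∧ z = c.rsmul x b}).topologicalClosure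
      with hpL
    have hpLset : (pL : Set X) = c.smulIdeal (L : Set B) := rfl
    -- kernel of ψ is contained in pL
    have hmono : c.smulIdeal (J : Set B) ⊆ (pL : Set X) := by
      rw [hpLset]
      refine closure_mono ?_
      apply SetLike.coe_subset_coe.mpr
      apply Submodule.span_mono
      rintro _ ⟨x, b, hb, rfl⟩
      exact ⟨x, b, hJL hb, rfl⟩
    have hker : ∀ z : X, ψ z = 0 → z ∈ pL := fun z hz => hmono ((hψker z).mp hz)
    -- ψ '' pL is closed
    have hquot : Topology.IsQuotientMap ψ := by
      rw [← hψ'coe]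
      exact (ψ'.isOpenMap (by rw [hψ'coe]; exact hψs)).isQuotientMap ψ'.continuous
        (by rw [hψ'coe]; exact hψs)
    have hpre : ψ ⁻¹' (ψ '' (pL : Set X)) = (pL : Set X) := by
      ext z
      constructor
      · rintro ⟨m, hm, hmz⟩
        have : z - m ∈ pL := hker _ (by rw [map_sub, hmz, sub_self])
        simpa using pL.add_mem hm this
      · intro hz; exact ⟨z, hz, rfl⟩
    have hclosed : IsClosed (ψ '' (pL : Set X)) := by
      rw [← hquot.isClosed_preimage, hpre]
      exact Submodule.isClosed_topologicalClosure _
    -- smulIdeal' (ρ '' L) ⊆ ψ '' pL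
    have hsub : c'.smulIdeal (ρ '' (L : Set B)) ⊆ ψ '' (pL : Set X) := by
      apply closure_minimal ?_ hclosed
      have : (Submodule.map ψ pL : Set X') = ψ '' (pL : Set X) := rfl
      rw [← this]
      apply SetLike.coe_subset_coe.mpr
      rw [Submodule.span_le]
      rintro _ ⟨x', _, ⟨l, hl, rfl⟩, rfl⟩
      obtain ⟨x, rfl⟩ := hψs x'
      refine ⟨c.rsmul x l, ?_, hom_r x l⟩
      exact Submodule.le_topologicalClosure _ (Submodule.subset_span ⟨x, l, hl, rfl⟩)
    -- conclude
    obtain ⟨m, hm, hmz⟩ := hsub hmem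
    have : c.lsmul a x - m ∈ pL := hker _ (by rw [map_sub, hmz, sub_self])
    rw [← hpLset]
    simpa using pL.add_mem hm this

end
end

section
/- In a C*-algebra A, let (I_τ)_{τ∈T} be a nonempty family of closed two-sided ideals and let J be a closed two-sided ideal. Then the closed linear span of the family (J ∩ I_τ)_{τ∈T} equals J ∩ (closed linear span of the family (I_τ)_{τ∈T}). -/
open scoped NNReal ContinuousMapZero

section Aux

variable {A : Type*} [NonUnitalCStarAlgebra A]

local notation "σₙ" => quasispectrum

/-- Induction principle for membership in a supremum of two-sided ideals. -/
lemma TwoSidedIdeal.iSup_induction_aux {ι : Type*} (I : ι → TwoSidedIdeal A) {P : A → Prop}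
    (mem : ∀ τ, ∀ x ∈ I τ, P x) (zero : P 0) (add : ∀ x y, P x → P y → P (x + y))
    {x : A} (hx : x ∈ ⨆ τ, I τ) : P x := by
  let G : ι → AddSubgroup A := fun τ =>
    { carrier := (I τ : Set A)
      add_mem' := fun h1 h2 => TwoSidedIdeal.add_mem _ h1 h2
      zero_mem' := TwoSidedIdeal.zero_mem _
      neg_mem' := fun h => TwoSidedIdeal.neg_mem _ h }
  have hGmem : ∀ τ (z : A), z ∈ G τ ↔ z ∈ I τ := fun _ _ => Iff.rfl
  have hmul_left : ∀ (u z : A), z ∈ (⨆ τ, G τ) → u * z ∈ (⨆ τ, G τ) := by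
    intro u z hz
    refine AddSubgroup.iSup_induction (C := fun w => u * w ∈ ⨆ τ, G τ) G hz
      (fun τ w hw => ?_)
      (by show u * 0 ∈ ⨆ τ, G τ; rw [mul_zero]; exact (⨆ τ, G τ).zero_mem)
      (fun w₁ w₂ h1 h2 => by
        show u * (w₁ + w₂) ∈ ⨆ τ, G τ
        rw [mul_add]; exact (⨆ τ, G τ).add_mem h1 h2)
    exact AddSubgroup.mem_iSup_of_mem τ <| (hGmem τ _).mpr <|
      TwoSidedIdeal.mul_mem_left _ _ _ ((hGmem τ w).mp hw)
  have hmul_right : ∀ (u z : A), z ∈ (⨆ τ, G τ) → z * u ∈ (⨆ τ, G τ) := by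
    intro u z hz
    refine AddSubgroup.iSup_induction (C := fun w => w * u ∈ ⨆ τ, G τ) G hz
      (fun τ w hw => ?_)
      (by show (0 : A) * u ∈ ⨆ τ, G τ; rw [zero_mul]; exact (⨆ τ, G τ).zero_mem)
      (fun w₁ w₂ h1 h2 => by
        show (w₁ + w₂) * u ∈ ⨆ τ, G τ
        rw [add_mul]; exact (⨆ τ, G τ).add_mem h1 h2)
    exact AddSubgroup.mem_iSup_of_mem τ <| (hGmem τ _).mpr <|
      TwoSidedIdeal.mul_mem_right _ _ _ ((hGmem τ w).mp hw)
  let M : TwoSidedIdeal A := .mk' ((⨆ τ, G τ : AddSubgroup A) : Set A)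
    ((⨆ τ, G τ).zero_mem) (fun h1 h2 => (⨆ τ, G τ).add_mem h1 h2)
    (fun h => (⨆ τ, G τ).neg_mem h)
    (fun {u z} hz => hmul_left u z hz) (fun {z u} hz => hmul_right u z hz)
  have hle : (⨆ τ, I τ) ≤ M := by
    refine iSup_le fun τ => ?_
    intro z hz
    exact (TwoSidedIdeal.mem_mk' _ _ _ _ _ _ _).mpr <|
      AddSubgroup.mem_iSup_of_mem τ ((hGmem τ z).mpr hz)
  have hxG : x ∈ ⨆ τ, G τ := (TwoSidedIdeal.mem_mk' _ _ _ _ _ _ _).mp (hle hx)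
  exact AddSubgroup.iSup_induction (C := P) G hxG (fun τ w hw => mem τ w ((hGmem τ w).mp hw))
    zero (fun _ _ h1 h2 => add _ _ h1 h2)

set_option maxHeartbeats 1000000 in
/-- Core approximation lemma: `x` is approximated by `x * cfcₙ f (x⋆x)` for nice `f`. -/
lemma exists_cfc_mul_approx (x : A) {ε : ℝ} (hε : 0 < ε) :
    ∃ f : ℝ → ℝ, Continuous f ∧ f 0 = 0 ∧ ‖x - x * cfcₙ f (star x * x)‖ < ε := by
  obtain ⟨n, hn⟩ := exists_nat_one_div_lt (show (0 : ℝ) < ε ^ 2 by positivity)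
  set a := star x * x with ha_def
  have ha : IsSelfAdjoint a := IsSelfAdjoint.star_mul_self x
  set f : ℝ → ℝ := fun t => min ((n + 1) * t) 1 with hf_def
  have hf : Continuous f := (continuous_const.mul continuous_id).min continuous_const
  have hf0 : f 0 = 0 := by simp [hf_def]
  refine ⟨f, hf, hf0, ?_⟩
  set e := cfcₙ f a with he_def
  have he : IsSelfAdjoint e := cfcₙ_predicate f a
  -- quasispectrum of a is nonneg
  have hspec : ∀ t ∈ σₙ ℝ a, (0 : ℝ) ≤ t := by
    intro t ht
    rw [Unitization.quasispectrum_eq_spectrum_inr' ℝ ℂ a] at ht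
    refine spectrum_nonneg_of_nonneg ?_ ht
    rw [ha_def, Unitization.inr_mul, Unitization.inr_star]
    exact star_mul_self_nonneg _
  -- express star c * c via cfcₙ
  have hid : ContinuousOn (fun t : ℝ => t) (σₙ ℝ a) := continuousOn_id
  have htf : Continuous (fun t : ℝ => t * f t) := continuous_id.mul hf
  have htf0 : (fun t : ℝ => t * f t) 0 = 0 := by simp
  have hft : Continuous (fun t : ℝ => f t * t) := hf.mul continuous_id
  have hft0 : (fun t : ℝ => f t * t) 0 = 0 := by simp
  have hftf : Continuous (fun t : ℝ => f t * (t * f t)) := hf.mul htf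
  have hftf0 : (fun t : ℝ => f t * (t * f t)) 0 = 0 := by simp [hf0]
  have h1 : cfcₙ (fun t : ℝ => t * f t) a = a * e := by
    rw [cfcₙ_mul (fun t : ℝ => t) f a hid rfl hf.continuousOn hf0, cfcₙ_id' ℝ a]
  have h3 : cfcₙ (fun t : ℝ => f t * (t * f t)) a = e * (a * e) := by
    rw [cfcₙ_mul f (fun t : ℝ => t * f t) a hf.continuousOn hf0 htf.continuousOn htf0, h1]
  have h2 : cfcₙ (fun t : ℝ => f t * t) a = e * a := by
    rw [cfcₙ_mul f (fun t : ℝ => t) a hf.continuousOn hf0 hid rfl, cfcₙ_id' ℝ a]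
  have h4 : cfcₙ (fun t : ℝ => t - t * f t) a = a - a * e := by
    rw [cfcₙ_sub (fun t : ℝ => t) (fun t : ℝ => t * f t) a hid rfl htf.continuousOn htf0,
      cfcₙ_id' ℝ a, h1]
  have h5 : cfcₙ (fun t : ℝ => f t * t - f t * (t * f t)) a = e * a - e * (a * e) := by
    rw [cfcₙ_sub (fun t : ℝ => f t * t) (fun t : ℝ => f t * (t * f t)) a hft.continuousOn hft0
      hftf.continuousOn hftf0, h2, h3]
  have key : cfcₙ (fun t : ℝ => (t - t * f t) - (f t * t - f t * (t * f t))) a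
      = (a - a * e) - (e * a - e * (a * e)) := by
    rw [cfcₙ_sub (fun t : ℝ => t - t * f t) (fun t : ℝ => f t * t - f t * (t * f t)) a
      ((continuous_id.sub htf).continuousOn) (by simp) ((hft.sub hftf).continuousOn)
      (by simp [hf0]), h4, h5]
  have hsq : star (x - x * e) * (x - x * e)
      = cfcₙ (fun t : ℝ => (t - t * f t) - (f t * t - f t * (t * f t))) a := by
    rw [key, star_sub, star_mul, he.star_eq, ha_def]
    noncomm_ring
  -- norm bound
  have hbound : ∀ t ∈ σₙ ℝ a, ‖(t - t * f t) - (f t * t - f t * (t * f t))‖ ≤ 1 / (n + 1) := by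
    intro t ht
    have ht0 : (0 : ℝ) ≤ t := hspec t ht
    have hexpr : (t - t * f t) - (f t * t - f t * (t * f t)) = t * (1 - f t) ^ 2 := by ring
    rw [hexpr, Real.norm_eq_abs]
    rcases le_or_gt 1 ((n + 1) * t) with hc | hc
    · have : f t = 1 := min_eq_right hc
      simp [this]
      positivity
    · have hft : f t = (n + 1) * t := min_eq_left hc.le
      have h0f : 0 ≤ f t := by rw [hft]; positivity
      have h1f : f t ≤ 1 := min_le_right _ _
      have habs : |t * (1 - f t) ^ 2| = t * (1 - f t) ^ 2 := by
        apply abs_of_nonneg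
        have : (0:ℝ) ≤ (1 - f t) ^ 2 := sq_nonneg _
        positivity
      rw [habs]
      have hsq1 : (1 - f t) ^ 2 ≤ 1 := by nlinarith
      have ht' : t ≤ 1 / (n + 1) := by
        rw [le_div_iff₀ (by positivity)]
        nlinarith
      nlinarith
  have hnorm : ‖star (x - x * e) * (x - x * e)‖ ≤ 1 / (n + 1) := by
    rw [hsq]
    exact norm_cfcₙ_le hbound
  have hCstar : ‖star (x - x * e) * (x - x * e)‖ = ‖x - x * e‖ * ‖x - x * e‖ :=
    CStarRing.norm_star_mul_self
  have hlt : ‖x - x * e‖ * ‖x - x * e‖ < ε ^ 2 := by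
    rw [← hCstar]
    exact lt_of_le_of_lt hnorm (by exact_mod_cast hn)
  nlinarith [norm_nonneg (x - x * e)]

/-- A closed two-sided ideal of a C*-algebra is closed under real scalar multiplication. -/
lemma TwoSidedIdeal.smul_mem_of_isClosed (J : TwoSidedIdeal A) (hJ : IsClosed (J : Set A))
    (r : ℝ) {y : A} (hy : y ∈ J) : r • y ∈ J := by
  rcases eq_or_ne r 0 with rfl | hr
  · rw [zero_smul]; exact zero_mem _
  have habs : (0 : ℝ) < |r| := abs_pos.mpr hr
  have hmem : r • y ∈ closure (J : Set A) := by
    rw [Metric.mem_closure_iff]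
    intro ε hε
    obtain ⟨f, hf, hf0, happrox⟩ := exists_cfc_mul_approx y (div_pos hε habs)
    refine ⟨y * (r • cfcₙ f (star y * y)), ?_, ?_⟩
    · exact J.mul_mem_right _ _ hy
    · rw [dist_eq_norm, mul_smul_comm, ← smul_sub, norm_smul, Real.norm_eq_abs]
      calc |r| * ‖y - y * cfcₙ f (star y * y)‖ < |r| * (ε / |r|) := by
            exact mul_lt_mul_of_pos_left happrox habs
        _ = ε := by field_simp
  rwa [hJ.closure_eq] at hmem

/-- `cfcₙ` of a selfadjoint element of a closed ideal stays in the ideal. -/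
lemma cfcₙ_mem_of_isClosed (J : TwoSidedIdeal A) (hJ : IsClosed (J : Set A))
    {a : A} (haJ : a ∈ J) (ha : IsSelfAdjoint a) {f : ℝ → ℝ} (hf : Continuous f)
    (hf0 : f 0 = 0) : cfcₙ f a ∈ J := by
  rw [cfcₙ_apply f a hf.continuousOn hf0 ha]
  have hcompact : CompactSpace (σₙ ℝ a) :=
    isCompact_iff_compactSpace.mp
      (NonUnitalContinuousFunctionalCalculus.isCompact_quasispectrum (R := ℝ) a)
  suffices H : ∀ g : C(σₙ ℝ a, ℝ)₀, cfcₙHom (R := ℝ) ha g ∈ J from H _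
  intro g
  have h0 : ((0 : σₙ ℝ a) : ℝ) = 0 := rfl
  induction g using ContinuousMapZero.induction_on_of_compact with
  | zero => rw [map_zero]; exact TwoSidedIdeal.zero_mem _
  | id =>
    have h : cfcₙHom (R := ℝ) ha (ContinuousMapZero.id (σₙ ℝ a)) = a := cfcₙHom_id ha
    rw [h]; exact haJ
  | star_id =>
    have hstar : star (ContinuousMapZero.id (σₙ ℝ a))
        = ContinuousMapZero.id (σₙ ℝ a) := by
      ext z
      simp
    rw [hstar]
    have h : cfcₙHom (R := ℝ) ha (ContinuousMapZero.id (σₙ ℝ a)) = a := cfcₙHom_id ha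
    rw [h]; exact haJ
  | add f g hf hg => rw [map_add]; exact TwoSidedIdeal.add_mem _ hf hg
  | mul f g hf hg => rw [map_mul]; exact J.mul_mem_left _ _ hg
  | smul r f hf => rw [map_smul]; exact J.smul_mem_of_isClosed hJ r hf
  | frequently f hfreq =>
    have hclosed : IsClosed {g : C(σₙ ℝ a, ℝ)₀ | cfcₙHom (R := ℝ) ha g ∈ J} :=
      hJ.preimage (cfcₙHom_isClosedEmbedding ha).continuous
    have hmem : f ∈ closure {g : C(σₙ ℝ a, ℝ)₀ | cfcₙHom (R := ℝ) ha g ∈ J} :=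
      mem_closure_iff_frequently.mpr hfreq
    rwa [hclosed.closure_eq] at hmem

/-- Approximation by a right multiplier lying in every closed ideal containing `x`. -/
lemma exists_approx_mem (x : A) {ε : ℝ} (hε : 0 < ε) :
    ∃ e : A, ‖x - x * e‖ < ε ∧
      ∀ (J : TwoSidedIdeal A), IsClosed (J : Set A) → x ∈ J → e ∈ J := by
  obtain ⟨f, hf, hf0, happrox⟩ := exists_cfc_mul_approx x hε
  exact ⟨cfcₙ f (star x * x), happrox, fun J hJ hxJ =>
    cfcₙ_mem_of_isClosed J hJ (J.mul_mem_left _ _ hxJ) (IsSelfAdjoint.star_mul_self x) hf hf0⟩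

end Aux

/-- KLQ "Coaction functors, II": in a C*-algebra, intersection with a closed ideal
distributes over closed linear spans of families of closed ideals:
`clspan_τ (J ∩ I_τ) = J ∩ clspan_τ I_τ`. -/
theorem inter_distrib_closed_span {A ι : Type*} [NonUnitalCStarAlgebra A] [Nonempty ι]
    (I : ι → TwoSidedIdeal A) (hI : ∀ τ, IsClosed ((I τ : TwoSidedIdeal A) : Set A))
    (J : TwoSidedIdeal A) (hJ : IsClosed (J : Set A)) :
    closure ((⨆ τ, J ⊓ I τ : TwoSidedIdeal A) : Set A) =
      (J : Set A) ∩ closure ((⨆ τ, I τ : TwoSidedIdeal A) : Set A) := by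
  apply Set.Subset.antisymm
  · -- easy direction
    apply closure_minimal ?_ (hJ.inter isClosed_closure)
    intro z hz
    rw [SetLike.mem_coe] at hz
    constructor
    · exact SetLike.mem_coe.mpr <| (iSup_le fun τ => inf_le_left : (⨆ τ, J ⊓ I τ) ≤ J) hz
    · exact subset_closure <| SetLike.mem_coe.mpr <|
        (iSup_mono fun τ => inf_le_right : (⨆ τ, J ⊓ I τ) ≤ ⨆ τ, I τ) hz
  · rintro z ⟨hzJ, hzcl⟩
    rw [SetLike.mem_coe] at hzJ
    set N : Set A := ((⨆ τ, J ⊓ I τ : TwoSidedIdeal A) : Set A) with hN_def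
    suffices h : ∀ ε > (0 : ℝ), ∃ b ∈ closure N, dist z b < ε by
      have := Metric.mem_closure_iff.mpr h
      rwa [closure_closure] at this
    intro ε hε
    obtain ⟨e, he, heJ⟩ := exists_approx_mem z hε
    have heJ' : e ∈ J := heJ J hJ hzJ
    refine ⟨z * e, ?_, by rw [dist_eq_norm]; exact he⟩
    -- z * e ∈ closure N
    have hmaps : ∀ y ∈ ((⨆ τ, I τ : TwoSidedIdeal A) : Set A), y * e ∈ N := by
      intro y hy
      rw [SetLike.mem_coe] at hy
      refine SetLike.mem_coe.mpr <|
        TwoSidedIdeal.iSup_induction_aux I (P := fun w => w * e ∈ ⨆ τ, J ⊓ I τ)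
          (fun τ w hw => ?_)
          (by show (0 : A) * e ∈ _; rw [zero_mul]; exact TwoSidedIdeal.zero_mem _)
          (fun w₁ w₂ h1 h2 => by
            show (w₁ + w₂) * e ∈ _
            rw [add_mul]
            exact TwoSidedIdeal.add_mem _ h1 h2) hy
      show w * e ∈ _
      refine (le_iSup (fun τ => J ⊓ I τ) τ) ?_
      rw [TwoSidedIdeal.mem_inf]
      exact ⟨TwoSidedIdeal.mul_mem_left _ _ _ heJ', TwoSidedIdeal.mul_mem_right _ _ _ hw⟩
    have hcont : Continuous fun y : A => y * e := continuous_id.mul continuous_const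
    have himg : z * e ∈ closure ((fun y : A => y * e) '' ((⨆ τ, I τ : TwoSidedIdeal A) : Set A)) :=
      (image_closure_subset_closure_image hcont) ⟨z, hzcl, rfl⟩
    exact closure_mono (by rintro _ ⟨y, hy, rfl⟩; exact hmaps y hy) himg
end

section
/- Let X be an A–B Hilbert bimodule with linking algebra structure, and suppose X is left-full, i.e., clspn{_A⟨X,X⟩} = A. Let J = clspn{⟨X,X⟩_B}, so X is an A–J imprimitivity bimodule. Let K_A be an ideal of A and K_B an ideal of B, and set K_J = J ∩ K_B. If K_A = X-Ind_J K_J (Rieffel induction over J), then K_A = X-Ind_B K_B (induction over B). -/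
open scoped MultiplierAlgebra

noncomputable section

/-!
Since `X·K_B ⊇ X·(J ∩ K_B)` trivially, the point is the reverse inclusion, and the two induced
ideals then coincide by definition. Every `x ∈ X` is a limit of elements `x·(⟨x,x⟩v)`, by the
functional calculus of `⟨x,x⟩`; hence every generator `x·b` with `b ∈ K_B` is a limit of
`x·(⟨x,x⟩vb)`, and `⟨x,x⟩vb = ⟨x, x·vb⟩` lies in `J ∩ K_B` because `K_B` is a left ideal.
-/

lemma abs_mul_div_add_sq_sq_le {δ : ℝ} (hδ : 0 < δ) (t : ℝ) :
    |t * (δ ^ 2 / (δ ^ 2 + t ^ 2)) ^ 2| ≤ δ / 2 := by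
  have hD : 0 < δ ^ 2 + t ^ 2 := by positivity
  have hAMGM : 2 * δ * |t| ≤ δ ^ 2 + t ^ 2 := by
    nlinarith [sq_nonneg (δ - |t|), sq_abs t]
  rw [abs_mul, abs_of_nonneg (sq_nonneg (δ ^ 2 / (δ ^ 2 + t ^ 2))), div_pow, mul_div_assoc',
    div_le_div_iff₀ (by positivity) two_pos]
  have hprod : 2 * δ * |t| * δ ^ 2 ≤ (δ ^ 2 + t ^ 2) ^ 2 := by
    rw [sq (δ ^ 2 + t ^ 2)]
    exact mul_le_mul hAMGM (le_add_of_nonneg_right (sq_nonneg t)) (by positivity) hD.le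
  nlinarith [mul_le_mul_of_nonneg_left hprod hδ.le]

namespace CStarCorr

variable {A B X : Type*} [NonUnitalCStarAlgebra A] [NonUnitalCStarAlgebra B]
    [NormedAddCommGroup X] [NormedSpace ℂ X] [CompleteSpace X] (c : CStarCorr A B X)

lemma inner_sub_right (x y z : X) : c.inner x (y - z) = c.inner x y - c.inner x z := by
  rw [sub_eq_add_neg, ← neg_one_smul ℂ z, c.inner_add_right, c.inner_smul_right, neg_one_smul,
    ← sub_eq_add_neg]

lemma inner_sub_left (x y z : X) : c.inner (x - y) z = c.inner x z - c.inner y z := by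
  rw [← c.star_inner z, c.inner_sub_right, star_sub, c.star_inner, c.star_inner]

lemma inner_rsmul_left (x y : X) (b : B) : c.inner (c.rsmul x b) y = star b * c.inner x y := by
  rw [← c.star_inner y, c.inner_rsmul_right, star_mul, c.star_inner]

lemma norm_rsmul_le (x : X) (b : B) : ‖c.rsmul x b‖ ≤ ‖x‖ * ‖b‖ := by
  have hsq : ‖c.rsmul x b‖ ^ 2 ≤ (‖x‖ * ‖b‖) ^ 2 := by
    rw [← c.norm_inner_self, c.inner_rsmul_right, c.inner_rsmul_left]
    calc ‖star b * c.inner x x * b‖ ≤ ‖star b‖ * ‖c.inner x x‖ * ‖b‖ := norm_mul₃_le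
      _ = (‖x‖ * ‖b‖) ^ 2 := by rw [norm_star, c.norm_inner_self]; ring
  exact (sq_le_sq₀ (norm_nonneg _) (by positivity)).mp hsq

lemma continuous_rsmul (b : B) : Continuous (c.rsmul · b) :=
  AddMonoidHomClass.continuous_of_bound (AddMonoidHom.mk' (c.rsmul · b) (c.add_rsmul · · b)) ‖b‖
    fun x => (c.norm_rsmul_le x b).trans_eq (mul_comm _ _)

lemma inner_sub_rsmul_self (x : X) {u : B} (hu : IsSelfAdjoint u) :
    c.inner (x - c.rsmul x u) (x - c.rsmul x u) =
      c.inner x x - c.inner x x * u - u * (c.inner x x - c.inner x x * u) := by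
  rw [c.inner_sub_left, c.inner_rsmul_left, hu.star_eq, c.inner_sub_right, c.inner_rsmul_right]

/-- Take `v = h(⟨x,x⟩)` with `h t = t / (δ² + t²)`. Then `‖x - x·⟨x,x⟩v‖² = ‖g(⟨x,x⟩)‖` for
`g t = t (δ² / (δ² + t²))²`, and `|g| ≤ δ / 2` on all of `ℝ`, so positivity of `⟨x,x⟩` is never
needed. -/
lemma mem_closure_range_rsmul_inner_self_mul (x : X) :
    x ∈ closure (Set.range fun v => c.rsmul x (c.inner x x * v)) := by
  set a := c.inner x x
  have ha : IsSelfAdjoint a := c.star_inner x x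
  rw [Metric.mem_closure_iff]
  intro ε hε
  set δ := ε ^ 2
  have hδ : 0 < δ := by positivity
  set h : ℝ → ℝ := fun t => t / (δ ^ 2 + t ^ 2)
  have hh : Continuous h := continuous_id.div (by fun_prop) fun t => by positivity
  have hu : a * cfcₙ h a = cfcₙ (fun t => t * h t) a := by
    rw [cfcₙ_mul (fun t : ℝ => t) h a, cfcₙ_id' ℝ a]
  have hsa : IsSelfAdjoint (a * cfcₙ h a) := hu ▸ IsSelfAdjoint.cfcₙ
  have hcfc : a - a * (a * cfcₙ h a) - a * cfcₙ h a * (a - a * (a * cfcₙ h a)) =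
      cfcₙ (fun t => t * (δ ^ 2 / (δ ^ 2 + t ^ 2)) ^ 2) a := by
    set f : ℝ → ℝ := fun t => t * h t
    have hf : Continuous f := by fun_prop
    have hfun : (fun t => t * (δ ^ 2 / (δ ^ 2 + t ^ 2)) ^ 2) =
        fun t => t - t * f t - f t * (t - t * f t) := by
      funext t
      have : δ ^ 2 + t ^ 2 ≠ 0 := by positivity
      simp only [f, h]
      field_simp
      ring
    rw [hu, hfun, cfcₙ_sub (fun t => t - t * f t) (fun t => f t * (t - t * f t)) a,
      cfcₙ_mul f (fun t => t - t * f t) a, cfcₙ_sub (fun t => t) (fun t => t * f t) a,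
      cfcₙ_mul (fun t => t) f a, cfcₙ_id' ℝ a]
  refine ⟨_, ⟨cfcₙ h a, rfl⟩, ?_⟩
  have hsq : ‖x - c.rsmul x (a * cfcₙ h a)‖ ^ 2 < δ := by
    rw [← c.norm_inner_self, c.inner_sub_rsmul_self x hsa, hcfc]
    exact (norm_cfcₙ_le fun t _ => abs_mul_div_add_sq_sq_le hδ t).trans_lt (half_lt_self hδ)
  rw [dist_eq_norm]
  exact lt_of_pow_lt_pow_left₀ 2 hε.le hsq

lemma smulIdeal_subset {S T : Set B} (h : ∀ x, ∀ b ∈ S, c.rsmul x b ∈ c.smulIdeal T) :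
    c.smulIdeal S ⊆ c.smulIdeal T := by
  refine closure_minimal ?_ isClosed_closure
  refine (Submodule.span_le (p := (Submodule.span ℂ _).topologicalClosure)).mpr ?_
  rintro _ ⟨x, b, hb, rfl⟩
  exact h x b hb

lemma smulIdeal_mono {S T : Set B} (hST : S ⊆ T) : c.smulIdeal S ⊆ c.smulIdeal T :=
  c.smulIdeal_subset fun x b hb => subset_closure (Submodule.subset_span ⟨x, b, hST hb, rfl⟩)

lemma smulIdeal_inter_eq_of_inner_mem {J S : Set B} (hJ : ∀ x y, c.inner x y ∈ J)
    (hS : ∀ u, ∀ b ∈ S, u * b ∈ S) : c.smulIdeal (J ∩ S) = c.smulIdeal S := by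
  refine (c.smulIdeal_mono Set.inter_subset_right).antisymm <| c.smulIdeal_subset fun x b hb => ?_
  refine closure_mono Submodule.subset_span <| map_mem_closure (f := (c.rsmul · b))
    (c.continuous_rsmul b) (c.mem_closure_range_rsmul_inner_self_mul x) ?_
  rintro _ ⟨v, rfl⟩
  refine ⟨x, c.inner x x * v * b, ⟨?_, hS _ b hb⟩, c.rsmul_mul _ _ _⟩
  rw [mul_assoc, ← c.inner_rsmul_right]
  exact hJ _ _

lemma ind_inter_eq_of_inner_mem {J S : Set B} (hJ : ∀ x y, c.inner x y ∈ J)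
    (hS : ∀ u, ∀ b ∈ S, u * b ∈ S) : c.ind (J ∩ S) = c.ind S := by
  simp only [ind, c.smulIdeal_inter_eq_of_inner_mem hJ hS]

end CStarCorr

theorem left_full_induction_general {A B X : Type*}
    [NonUnitalCStarAlgebra A] [NonUnitalCStarAlgebra B]
    [NormedAddCommGroup X] [NormedSpace ℂ X] [CompleteSpace X]
    (c : CStarBimod A B X)
    (J : Set B)
    (hJ : J = closure (Submodule.span ℂ
        {b : B | ∃ x y, b = c.toCStarCorr.inner x y} : Set B))
    (KA : TwoSidedIdeal A)
    (KB : TwoSidedIdeal B)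
    (h : (KA : Set A) = c.toCStarCorr.ind (J ∩ (KB : Set B))) :
    (KA : Set A) = c.toCStarCorr.ind (KB : Set B) := by
  have hinner : ∀ x y, c.inner x y ∈ J := fun x y =>
    hJ ▸ subset_closure (Submodule.subset_span ⟨x, y, rfl⟩)
  exact h.trans <| c.ind_inter_eq_of_inner_mem hinner fun u b hb => KB.mul_mem_left u b hb

/-- KLQ "Coaction functors, II": let `X` be a left-full `A`–`B` Hilbert bimodule and
`J = clspan⟨X,X⟩_B`, so `X` is an `A`–`J` imprimitivity bimodule.  If
`K_A = X-Ind_J (J ∩ K_B)` then `K_A = X-Ind_B K_B`. -/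
theorem left_full_induction {A B X : Type*}
    [NonUnitalCStarAlgebra A] [NonUnitalCStarAlgebra B]
    [NormedAddCommGroup X] [NormedSpace ℂ X] [CompleteSpace X]
    (c : CStarBimod A B X) (hlf : c.LeftFull)
    (J : Set B)
    (hJ : J = closure (Submodule.span ℂ
        {b : B | ∃ x y, b = c.toCStarCorr.inner x y} : Set B))
    (KA : TwoSidedIdeal A) (hKA : IsClosed (KA : Set A))
    (KB : TwoSidedIdeal B) (hKB : IsClosed (KB : Set B))
    (h : (KA : Set A) = c.toCStarCorr.ind (J ∩ (KB : Set B))) :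
    (KA : Set A) = c.toCStarCorr.ind (KB : Set B) :=
  left_full_induction_general c J hJ KA KB h

end
end
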